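/- In 𝔰𝔩₄(ℝ), let 𝔞 be the diagonal traceless matrices and bₙ = exp(n(E₁₂ + E₂₃ + E₃₄)). Then the sequence Ad bₙ(𝔞) converges in the Grassmannian Gr₃(𝔰𝔩₄(ℝ)) to the abelian subalgebra 𝔩_{[1:1:1]} = span{E₁₂ + E₂₃ + E₃₄, E₁₃ + E₂₄, E₁₄}. -/

import Mathlib

open Matrix Filter

noncomputable section

/-- Convergence of a sequence of subspaces (given as subsets of the ambient space) to a
limit subspace, in the Kuratowski sense; for subspaces of a fixed finite dimension this
is exactly convergence in the Grassmannian. -/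
def GrLimit {M : Type*} [TopologicalSpace M] (W : ℕ → Set M) (L : Set M) : Prop :=
  (∀ v ∈ L, ∃ u : ℕ → M, (∀ n, u n ∈ W n) ∧ Tendsto u atTop (nhds v)) ∧
  (∀ φ : ℕ → ℕ, StrictMono φ → ∀ u : ℕ → M, (∀ n, u n ∈ W (φ n)) →
    ∀ v : M, Tendsto u atTop (nhds v) → v ∈ L)

/-- Elementary matrix `Eᵢⱼ` in `M₄(ℝ)`. -/
def E (i j : Fin 4) : Matrix (Fin 4) (Fin 4) ℝ := Matrix.single i j 1

/-- `U = E₁₂ + E₂₃ + E₃₄`. -/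
def U : Matrix (Fin 4) (Fin 4) ℝ := E 0 1 + E 1 2 + E 2 3

/-- `bₙ = exp(nU)`, computed via the (terminating) exponential series of the nilpotent
matrix `nU`. -/
def b (n : ℕ) : Matrix (Fin 4) (Fin 4) ℝ :=
  1 + (n : ℝ) • U + ((n : ℝ) ^ 2 / 2) • (U * U) + ((n : ℝ) ^ 3 / 6) • (U * U * U)

/-- The Cartan subspace `𝔞` of diagonal traceless matrices, as a set. -/
def diagSet : Set (Matrix (Fin 4) (Fin 4) ℝ) :=
  {D | (∀ i j : Fin 4, i ≠ j → D i j = 0) ∧ Matrix.trace D = 0}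

/-!
With the grading element `H = diag(3,2,1,0)` we have `[H, U] = U`, hence
`Ad bₙ H = H - nU`, and since `H` is regular, `Ad bₙ(𝔞)` is the space of traceless matrices
commuting with `H - nU`. A limit of such matrices commutes with `U` (divide the commutator
relation by `n`), and the traceless centralizer of the regular nilpotent `U` is
`span{U, U², U³}`. Conversely `aU + cU² + dU³` is the limit of the traceless parts of
`a Yₙ + c Yₙ² + d Yₙ³` with `Yₙ = (nU - H)/(n+1) → U`, and these lie in `Ad bₙ(𝔞)`.
-/

theorem Matrix.commute_diagonal_iff_of_injective {n R : Type*} [Fintype n] [DecidableEq n]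
    [CommRing R] [NoZeroDivisors R] {d : n → R} (hd : Function.Injective d) (D : Matrix n n R) :
    Commute (diagonal d) D ↔ ∀ i j, i ≠ j → D i j = 0 := by
  have hentry : Commute (diagonal d) D ↔ ∀ i j, d i * D i j = D i j * d j := by
    simp only [Commute, SemiconjBy, ← Matrix.ext_iff, diagonal_mul, mul_diagonal]
  rw [hentry]
  refine ⟨fun h i j hij => ?_, fun h i j => ?_⟩
  · have : (d i - d j) * D i j = 0 := by rw [sub_mul, h, mul_comm]; ring
    exact (mul_eq_zero.mp this).resolve_left (sub_ne_zero.mpr (hd.ne hij))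
  · rcases eq_or_ne i j with rfl | hij
    · exact mul_comm _ _
    · simp [h i j hij]

theorem Commute.of_tendsto_sub_smul {A : Type*} [Ring A] [Algebra ℝ A] [TopologicalSpace A]
    [IsTopologicalRing A] [ContinuousSMul ℝ A] [T2Space A] {H U v : A} {t : ℕ → ℝ}
    {x : ℕ → A} (ht : Tendsto t atTop atTop) (hx : ∀ n, Commute (H - t n • U) (x n))
    (hxv : Tendsto x atTop (nhds v)) : Commute U v := by
  have hcomm : ∀ᶠ n in atTop, U * x n - x n * U = (t n)⁻¹ • (H * x n - x n * H) := by
    filter_upwards [ht.eventually_ne_atTop 0] with n hn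
    have h := (hx n).eq
    rw [sub_mul, mul_sub, smul_mul_assoc, mul_smul_comm, sub_eq_sub_iff_sub_eq_sub] at h
    rw [h, ← smul_sub, smul_smul, inv_mul_cancel₀ hn, one_smul]
  have hlim : Tendsto (fun n => (t n)⁻¹ • (H * x n - x n * H)) atTop (nhds 0) := by
    simpa using ht.inv_tendsto_atTop.smul
      ((tendsto_const_nhds.mul hxv).sub (hxv.mul tendsto_const_nhds))
  exact sub_eq_zero.mp <| tendsto_nhds_unique
    ((tendsto_const_nhds.mul hxv).sub (hxv.mul tendsto_const_nhds)) (hlim.congr' <| by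
      filter_upwards [hcomm] with n hn using hn.symm)

theorem Matrix.commute_conj_iff {m α : Type*} [Fintype m] [DecidableEq m] [CommRing α]
    {M : Matrix m m α} (hM : IsUnit M) (A B : Matrix m m α) :
    Commute (M * A * M⁻¹) (M * B * M⁻¹) ↔ Commute A B := by
  have hdet := (isUnit_iff_isUnit_det M).mp hM
  have hmul : ∀ X Y : Matrix m m α, M * X * M⁻¹ * (M * Y * M⁻¹) = M * (X * Y) * M⁻¹ := by
    intro X Y; simp only [Matrix.mul_assoc, nonsing_inv_mul_cancel_left _ _ hdet]
  simp only [Commute, SemiconjBy, hmul]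
  constructor
  · intro h
    simpa only [Matrix.mul_assoc, nonsing_inv_mul_cancel_left _ _ hdet, mul_nonsing_inv _ hdet,
      nonsing_inv_mul _ hdet, Matrix.mul_one] using congrArg (fun X => M⁻¹ * X * M) h
  · intro h; rw [h]

def H : Matrix (Fin 4) (Fin 4) ℝ := diagonal ![3, 2, 1, 0]

theorem U_eq : U = !![0, 1, 0, 0; 0, 0, 1, 0; 0, 0, 0, 1; 0, 0, 0, 0] := by
  ext i j; fin_cases i <;> fin_cases j <;> simp [U, E, single]

theorem U_sq : U ^ 2 = E 0 2 + E 1 3 := by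
  ext i j; fin_cases i <;> fin_cases j <;>
    simp [U_eq, E, single, sq, mul_apply, Fin.sum_univ_four]

theorem U_cube : U ^ 3 = E 0 3 := by
  ext i j; fin_cases i <;> fin_cases j <;>
    simp [U_eq, E, single, pow_succ, mul_apply, Fin.sum_univ_four]

theorem b_eq (n : ℕ) : b n = !![1, (n : ℝ), (n : ℝ) ^ 2 / 2, (n : ℝ) ^ 3 / 6;
    0, 1, (n : ℝ), (n : ℝ) ^ 2 / 2; 0, 0, 1, (n : ℝ); 0, 0, 0, 1] := by
  rw [b, U_eq]
  ext i j; fin_cases i <;> fin_cases j <;> simp [one_apply]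

theorem det_b (n : ℕ) : (b n).det = 1 := by
  rw [b_eq, det_succ_row_zero, Fin.sum_univ_succ]
  simp [det_fin_three, Fin.succAbove]

theorem sub_smul_U_mul_b (n : ℕ) : (H - (n : ℝ) • U) * b n = b n * H := by
  rw [b_eq, H, U_eq]
  ext i j; fin_cases i <;> fin_cases j <;> simp [mul_apply, Fin.sum_univ_four] <;> ring

theorem diagSet_eq : diagSet = {D | Commute H D ∧ trace D = 0} := by
  have hH : Function.Injective (![3, 2, 1, 0] : Fin 4 → ℝ) := by
    intro i j h; fin_cases i <;> fin_cases j <;> simp_all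
  ext D
  rw [H, Set.mem_ofPred_eq, commute_diagonal_iff_of_injective hH]
  rfl

theorem isUnit_b (n : ℕ) : IsUnit (b n) := by
  rw [isUnit_iff_isUnit_det, det_b]; exact isUnit_one

theorem image_conj_b_diagSet (n : ℕ) :
    (fun X => b n * X * (b n)⁻¹) '' diagSet =
      {X | Commute (H - (n : ℝ) • U) X ∧ trace X = 0} := by
  have hb := isUnit_b n
  have hdet := (isUnit_iff_isUnit_det _).mp hb
  have hconj : H - (n : ℝ) • U = b n * H * (b n)⁻¹ := by
    rw [← sub_smul_U_mul_b, Matrix.mul_assoc, mul_nonsing_inv _ hdet, Matrix.mul_one]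
  ext X
  simp only [diagSet_eq, Set.mem_image, Set.mem_ofPred_eq, hconj]
  constructor
  · rintro ⟨D, ⟨hHD, htr⟩, rfl⟩
    exact ⟨(commute_conj_iff hb H D).mpr hHD, by rw [trace_conj hb, htr]⟩
  · rintro ⟨hHX, htr⟩
    have hX : b n * ((b n)⁻¹ * X * b n) * (b n)⁻¹ = X := by
      simp only [Matrix.mul_assoc, mul_nonsing_inv_cancel_left _ _ hdet, mul_nonsing_inv _ hdet,
        Matrix.mul_one]
    refine ⟨(b n)⁻¹ * X * b n, ⟨?_, by rw [trace_conj' hb, htr]⟩, hX⟩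
    rw [← commute_conj_iff hb, hX]
    exact hHX

def tracelessCubic (a c d : ℝ) (X : Matrix (Fin 4) (Fin 4) ℝ) : Matrix (Fin 4) (Fin 4) ℝ :=
  a • X + c • X ^ 2 + d • X ^ 3 - (trace (a • X + c • X ^ 2 + d • X ^ 3) / 4) • 1

theorem commute_tracelessCubic (a c d : ℝ) (X : Matrix (Fin 4) (Fin 4) ℝ) :
    Commute X (tracelessCubic a c d X) := by
  have hpow : ∀ (k : ℕ) (r : ℝ), Commute X (r • X ^ k) := fun k r =>
    ((Commute.refl X).pow_right k).smul_right r
  exact ((((Commute.refl X).smul_right a).add_right (hpow 2 c)).add_right (hpow 3 d)).sub_right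
    ((Commute.one_right X).smul_right _)

theorem trace_tracelessCubic (a c d : ℝ) (X : Matrix (Fin 4) (Fin 4) ℝ) :
    trace (tracelessCubic a c d X) = 0 := by
  rw [tracelessCubic, trace_sub, trace_smul, trace_one, Fintype.card_fin, smul_eq_mul]
  ring

theorem continuous_tracelessCubic (a c d : ℝ) : Continuous (tracelessCubic a c d) := by
  unfold tracelessCubic; fun_prop

theorem tracelessCubic_U (a c d : ℝ) :
    tracelessCubic a c d U = a • U + c • (E 0 2 + E 1 3) + d • E 0 3 := by
  have htr : trace (a • U + c • (E 0 2 + E 1 3) + d • E 0 3) = 0 := by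
    simp [U, E, trace_single_eq_of_ne]
  rw [tracelessCubic, U_sq, U_cube, htr, zero_div, zero_smul, sub_zero]

/-- Unlike `U - H / n`, this is a multiple of `H - nU` also at `n = 0`. -/
def approxU (n : ℕ) : Matrix (Fin 4) (Fin 4) ℝ :=
  ((n : ℝ) / (n + 1)) • U - (1 / ((n : ℝ) + 1)) • H

theorem sub_smul_U_eq_smul_approxU (n : ℕ) :
    H - (n : ℝ) • U = (-((n : ℝ) + 1)) • approxU n := by
  have hn : (n : ℝ) + 1 ≠ 0 := by positivity
  rw [approxU, smul_sub, smul_smul, smul_smul]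
  field_simp
  rw [neg_smul, neg_smul, sub_neg_eq_add, neg_add_eq_sub, one_smul]

theorem tendsto_approxU : Tendsto approxU atTop (nhds U) := by
  unfold approxU
  simpa using ((tendsto_natCast_div_add_atTop (1 : ℝ)).smul_const U).sub
    ((tendsto_one_div_add_atTop_nhds_zero_nat (𝕜 := ℝ)).smul_const H)

theorem exists_of_commute_U_of_trace_eq_zero {v : Matrix (Fin 4) (Fin 4) ℝ} (hUv : Commute U v)
    (htr : trace v = 0) : ∃ a c d : ℝ, v = a • U + c • (E 0 2 + E 1 3) + d • E 0 3 := by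
  have h : ∀ i j, (U * v) i j = (v * U) i j := fun i j => congrFun (congrFun hUv.eq i) j
  simp only [U_eq, mul_apply, Fin.sum_univ_four, Fin.forall_fin_succ] at h
  rw [trace, Fin.sum_univ_four] at htr
  refine ⟨v 0 1, v 0 2, v 0 3, ?_⟩
  ext i j
  fin_cases i <;> fin_cases j <;> simp [U, E, single, diag] at h htr ⊢ <;> linarith

/-- `Ad bₙ(𝔞)` converges in the Grassmannian `Gr₃(𝔰𝔩₄(ℝ))` to
`𝔩_{[1:1:1]} = span{E₁₂ + E₂₃ + E₃₄, E₁₃ + E₂₄, E₁₄}`. -/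
theorem stmt16 :
    GrLimit (fun n => (fun X => b n * X * (b n)⁻¹) '' diagSet)
      {M : Matrix (Fin 4) (Fin 4) ℝ | ∃ a c d : ℝ,
        M = a • U + c • (E 0 2 + E 1 3) + d • E 0 3} := by
  simp only [image_conj_b_diagSet]
  constructor
  · rintro v ⟨a, c, d, rfl⟩
    refine ⟨fun n => tracelessCubic a c d (approxU n), fun n => ⟨?_, trace_tracelessCubic ..⟩, ?_⟩
    · rw [sub_smul_U_eq_smul_approxU]
      exact (commute_tracelessCubic a c d _).smul_left _
    · rw [← tracelessCubic_U]
      exact ((continuous_tracelessCubic a c d).tendsto U).comp tendsto_approxU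
  · intro φ hφ u hu v hv
    have hUv : Commute U v := Commute.of_tendsto_sub_smul
      (tendsto_natCast_atTop_atTop.comp hφ.tendsto_atTop) (fun n => (hu n).1) hv
    have htr : trace v = 0 := tendsto_nhds_unique ((continuous_id.matrix_trace.tendsto v).comp hv)
      (tendsto_const_nhds.congr fun n => (hu n).2.symm)
    exact exists_of_commute_U_of_trace_eq_zero hUv htr
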